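/- arXiv:2208.11054 — 3 statements merged into one kernel-verified Lean document; each statement's English description precedes it below -/
import Mathlib

section
/- Let u, v : (0,T) × ℝ^n → ℂ be smooth solutions of the heat equation and let δ > 0. Then the function v_δ = √(δ² + |uv|²) satisfies (∂_t − Δ) v_δ ≤ 2|∇u·∇v| pointwise. -/
open scoped BigOperators

/-- Time derivative `∂_t f` of a map on `ℝ × ℝⁿ`. -/
noncomputable def pt {n : ℕ} {F : Type*} [NormedAddCommGroup F] [NormedSpace ℝ F]
    (f : ℝ × EuclideanSpace ℝ (Fin n) → F) (p : ℝ × EuclideanSpace ℝ (Fin n)) : F :=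
  fderiv ℝ f p (1, 0)

/-- Spatial partial derivative `∂_i f` of a map on `ℝ × ℝⁿ`. -/
noncomputable def px {n : ℕ} {F : Type*} [NormedAddCommGroup F] [NormedSpace ℝ F]
    (f : ℝ × EuclideanSpace ℝ (Fin n) → F) (i : Fin n)
    (p : ℝ × EuclideanSpace ℝ (Fin n)) : F :=
  fderiv ℝ f p (0, EuclideanSpace.single i 1)

/-- Spatial Laplacian `Δf = Σᵢ ∂ᵢ∂ᵢ f` of a map on `ℝ × ℝⁿ`. -/
noncomputable def lap {n : ℕ} {F : Type*} [NormedAddCommGroup F] [NormedSpace ℝ F]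
    (f : ℝ × EuclideanSpace ℝ (Fin n) → F) (p : ℝ × EuclideanSpace ℝ (Fin n)) : F :=
  ∑ i : Fin n, px (px f i) i p

section auxlemmas

/-- The spatial direction vectors. -/
private noncomputable def ee {n : ℕ} (i : Fin n) : ℝ × EuclideanSpace ℝ (Fin n) :=
  (0, EuclideanSpace.single i 1)

variable {n : ℕ}

private lemma diffSlice {F : Type*} [NormedAddCommGroup F] [NormedSpace ℝ F]
    {f : ℝ × EuclideanSpace ℝ (Fin n) → F} {p : ℝ × EuclideanSpace ℝ (Fin n)}
    (hf : ContDiffAt ℝ (⊤ : ℕ∞) f p) (c : ℝ × EuclideanSpace ℝ (Fin n)) :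
    DifferentiableAt ℝ (fun q => fderiv ℝ f q c) p :=
  ((hf.fderiv_right (m := 1) (WithTop.coe_le_coe.2 le_top)).clm_apply contDiffAt_const).differentiableAt one_ne_zero

private lemma fmul {f g : ℝ × EuclideanSpace ℝ (Fin n) → ℂ} {p : ℝ × EuclideanSpace ℝ (Fin n)}
    (hf : DifferentiableAt ℝ f p) (hg : DifferentiableAt ℝ g p)
    (c : ℝ × EuclideanSpace ℝ (Fin n)) :
    fderiv ℝ (fun q => f q * g q) p c = fderiv ℝ f p c * g p + f p * fderiv ℝ g p c := by
  rw [fderiv_fun_mul hf hg]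
  simp only [ContinuousLinearMap.add_apply, ContinuousLinearMap.coe_smul', Pi.smul_apply,
    smul_eq_mul]
  ring

private lemma rmul {f g : ℝ × EuclideanSpace ℝ (Fin n) → ℝ} {p : ℝ × EuclideanSpace ℝ (Fin n)}
    (hf : DifferentiableAt ℝ f p) (hg : DifferentiableAt ℝ g p)
    (c : ℝ × EuclideanSpace ℝ (Fin n)) :
    fderiv ℝ (fun q => f q * g q) p c = fderiv ℝ f p c * g p + f p * fderiv ℝ g p c := by
  rw [fderiv_fun_mul hf hg]
  simp only [ContinuousLinearMap.add_apply, ContinuousLinearMap.coe_smul', Pi.smul_apply,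
    smul_eq_mul]
  ring

private lemma sqrtDeriv (δ : ℝ) (hδ : 0 < δ) {w : ℝ × EuclideanSpace ℝ (Fin n) → ℂ}
    {q : ℝ × EuclideanSpace ℝ (Fin n)} (hw : DifferentiableAt ℝ w q)
    (c : ℝ × EuclideanSpace ℝ (Fin n)) :
    fderiv ℝ (fun r => Real.sqrt (δ ^ 2 + ‖w r‖ ^ 2)) q c *
        Real.sqrt (δ ^ 2 + ‖w q‖ ^ 2) = (inner ℝ (w q) (fderiv ℝ w q c) : ℝ) := by
  have hpos : 0 < δ ^ 2 + ‖w q‖ ^ 2 := by positivity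
  have h1 : HasFDerivAt (fun r => ‖w r‖ ^ 2)
      (2 • (innerSL ℝ (w q)).comp (fderiv ℝ w q)) q := hw.hasFDerivAt.norm_sq
  have h2 : HasFDerivAt (fun r => δ ^ 2 + ‖w r‖ ^ 2)
      (2 • (innerSL ℝ (w q)).comp (fderiv ℝ w q)) q := h1.const_add _
  have h3 := (Real.hasDerivAt_sqrt hpos.ne').comp_hasFDerivAt q h2
  have h4 : fderiv ℝ (fun r => Real.sqrt (δ ^ 2 + ‖w r‖ ^ 2)) q
      = (1 / (2 * Real.sqrt (δ ^ 2 + ‖w q‖ ^ 2))) •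
        (2 • (innerSL ℝ (w q)).comp (fderiv ℝ w q)) := h3.fderiv
  rw [h4]
  have hsq : Real.sqrt (δ ^ 2 + ‖w q‖ ^ 2) ≠ 0 := (Real.sqrt_pos.2 hpos).ne'
  simp only [ContinuousLinearMap.smul_apply, ContinuousLinearMap.coe_smul', Pi.smul_apply,
    ContinuousLinearMap.coe_comp', Function.comp_apply, innerSL_apply_apply, smul_eq_mul,
    nsmul_eq_mul, Nat.cast_ofNat]
  field_simp

/-- Key inequality for an abstract `w` satisfying `(∂ₜ - Δ) w = -2 g` at `p`. -/
private lemma keyIneq {T δ : ℝ} (hδ : 0 < δ)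
    {w : ℝ × EuclideanSpace ℝ (Fin n) → ℂ} {g : ℂ}
    {p : ℝ × EuclideanSpace ℝ (Fin n)}
    (hp : p ∈ Set.Ioo 0 T ×ˢ (Set.univ : Set (EuclideanSpace ℝ (Fin n))))
    (hCw : ∀ q ∈ Set.Ioo 0 T ×ˢ (Set.univ : Set (EuclideanSpace ℝ (Fin n))),
      ContDiffAt ℝ (⊤ : ℕ∞) w q)
    (hkey : pt w p - lap w p = -2 * g) :
    pt (fun q => Real.sqrt (δ ^ 2 + ‖w q‖ ^ 2)) p -
        lap (fun q => Real.sqrt (δ ^ 2 + ‖w q‖ ^ 2)) p ≤ 2 * ‖g‖ := by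
  have hΩ : IsOpen (Set.Ioo (0:ℝ) T ×ˢ (Set.univ : Set (EuclideanSpace ℝ (Fin n)))) :=
    isOpen_Ioo.prod isOpen_univ
  have hmem : Set.Ioo (0:ℝ) T ×ˢ (Set.univ : Set (EuclideanSpace ℝ (Fin n))) ∈ nhds p :=
    hΩ.mem_nhds hp
  set φ : ℝ × EuclideanSpace ℝ (Fin n) → ℝ :=
    fun q => Real.sqrt (δ ^ 2 + ‖w q‖ ^ 2) with hφdef
  have hwd : ∀ q ∈ Set.Ioo (0:ℝ) T ×ˢ (Set.univ : Set (EuclideanSpace ℝ (Fin n))),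
      DifferentiableAt ℝ w q := fun q hq => (hCw q hq).differentiableAt (by simp)
  have hpos : ∀ q, 0 < δ ^ 2 + ‖w q‖ ^ 2 := fun q => by positivity
  have hwp := hCw p hp
  have hwpd := hwp.differentiableAt (by simp)
  have hφC : ContDiffAt ℝ (⊤ : ℕ∞) φ p := by
    rw [hφdef]
    exact (contDiffAt_const.add (hwp.norm_sq ℝ)).sqrt (hpos p).ne'
  have hs : 0 < φ p := Real.sqrt_pos.2 (hpos p)
  have R1 : ∀ q ∈ Set.Ioo (0:ℝ) T ×ˢ (Set.univ : Set (EuclideanSpace ℝ (Fin n))), ∀ c,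
      fderiv ℝ φ q c * φ q = (inner ℝ (w q) (fderiv ℝ w q c) : ℝ) :=
    fun q hq c => sqrtDeriv δ hδ (hwd q hq) c
  have hWd : ∀ c, DifferentiableAt ℝ (fun q => fderiv ℝ w q c) p := fun c => diffSlice hwp c
  have hφslice : ∀ c, DifferentiableAt ℝ (fun q => fderiv ℝ φ q c) p := fun c => diffSlice hφC c
  -- second derivative relation
  have R2 : ∀ i : Fin n,
      fderiv ℝ (fun q => fderiv ℝ φ q (ee i)) p (ee i) * φ p
        = ‖fderiv ℝ w p (ee i)‖ ^ 2
          + (inner ℝ (w p) (fderiv ℝ (fun q => fderiv ℝ w q (ee i)) p (ee i)) : ℝ)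
          - (fderiv ℝ φ p (ee i)) ^ 2 := by
    intro i
    have hEq : (fun q => fderiv ℝ φ q (ee i) * φ q)
        =ᶠ[nhds p] (fun q => (inner ℝ (w q) (fderiv ℝ w q (ee i)) : ℝ)) :=
      Filter.eventuallyEq_of_mem hmem (fun q hq => R1 q hq (ee i))
    have happ : fderiv ℝ (fun q => fderiv ℝ φ q (ee i) * φ q) p (ee i)
        = fderiv ℝ (fun q => (inner ℝ (w q) (fderiv ℝ w q (ee i)) : ℝ)) p (ee i) := by
      rw [hEq.fderiv_eq]
    have hL : fderiv ℝ (fun q => fderiv ℝ φ q (ee i) * φ q) p (ee i)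
        = fderiv ℝ (fun q => fderiv ℝ φ q (ee i)) p (ee i) * φ p
          + fderiv ℝ φ p (ee i) * fderiv ℝ φ p (ee i) :=
      rmul (hφslice (ee i)) (hφC.differentiableAt (by simp)) (ee i)
    have hR : fderiv ℝ (fun q => (inner ℝ (w q) (fderiv ℝ w q (ee i)) : ℝ)) p (ee i)
        = (inner ℝ (w p) (fderiv ℝ (fun q => fderiv ℝ w q (ee i)) p (ee i)) : ℝ)
          + (inner ℝ (fderiv ℝ w p (ee i)) (fderiv ℝ w p (ee i)) : ℝ) :=
      fderiv_inner_apply ℝ hwpd (hWd (ee i)) (ee i)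
    have hself : (inner ℝ (fderiv ℝ w p (ee i)) (fderiv ℝ w p (ee i)) : ℝ)
        = ‖fderiv ℝ w p (ee i)‖ ^ 2 := real_inner_self_eq_norm_sq _
    rw [hL, hR, hself] at happ
    linarith
  -- first derivative values at p
  have hA : ∀ c, fderiv ℝ φ p c * φ p = (inner ℝ (w p) (fderiv ℝ w p c) : ℝ) := R1 p hp
  -- Cauchy–Schwarz consequences
  have hwle : ‖w p‖ ≤ φ p := by
    rw [hφdef]
    have h1 : ‖w p‖ ^ 2 ≤ δ ^ 2 + ‖w p‖ ^ 2 := by nlinarith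
    have := Real.sqrt_le_sqrt h1
    rwa [Real.sqrt_sq (norm_nonneg _)] at this
  have hwn : ‖w p‖ ^ 2 ≤ (φ p) ^ 2 := by nlinarith [norm_nonneg (w p), hs]
  have haux : ∀ i : Fin n, (fderiv ℝ φ p (ee i)) ^ 2 ≤ ‖fderiv ℝ w p (ee i)‖ ^ 2 := by
    intro i
    have hcs := real_inner_mul_inner_self_le (w p) (fderiv ℝ w p (ee i))
    rw [real_inner_self_eq_norm_sq, real_inner_self_eq_norm_sq] at hcs
    have hAi := hA (ee i)
    have h1 : (fderiv ℝ φ p (ee i)) ^ 2 * (φ p) ^ 2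
        = (inner ℝ (w p) (fderiv ℝ w p (ee i)) : ℝ) ^ 2 := by
      rw [← hAi]; ring
    have h2 : (inner ℝ (w p) (fderiv ℝ w p (ee i)) : ℝ) ^ 2
        ≤ (φ p) ^ 2 * ‖fderiv ℝ w p (ee i)‖ ^ 2 := by nlinarith [sq_nonneg (‖fderiv ℝ w p (ee i)‖)]
    have h3 : (fderiv ℝ φ p (ee i)) ^ 2 * (φ p) ^ 2
        ≤ ‖fderiv ℝ w p (ee i)‖ ^ 2 * (φ p) ^ 2 := by nlinarith
    exact le_of_mul_le_mul_right h3 (by positivity)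
  -- restate goal and hypothesis in explicit form
  have hkey' : fderiv ℝ w p ((1:ℝ), (0 : EuclideanSpace ℝ (Fin n)))
      - ∑ i : Fin n, fderiv ℝ (fun q => fderiv ℝ w q (ee i)) p (ee i) = -2 * g := hkey
  show fderiv ℝ φ p ((1:ℝ), (0 : EuclideanSpace ℝ (Fin n)))
      - ∑ i : Fin n, fderiv ℝ (fun q => fderiv ℝ φ q (ee i)) p (ee i) ≤ 2 * ‖g‖
  refine le_of_mul_le_mul_right ?_ hs
  have hexp : (fderiv ℝ φ p ((1:ℝ), (0 : EuclideanSpace ℝ (Fin n))) -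
        ∑ i : Fin n, fderiv ℝ (fun q => fderiv ℝ φ q (ee i)) p (ee i)) * φ p
      = (inner ℝ (w p) (fderiv ℝ w p ((1:ℝ), (0 : EuclideanSpace ℝ (Fin n)))) : ℝ)
        - ∑ i : Fin n, (‖fderiv ℝ w p (ee i)‖ ^ 2
            + (inner ℝ (w p) (fderiv ℝ (fun q => fderiv ℝ w q (ee i)) p (ee i)) : ℝ)
            - (fderiv ℝ φ p (ee i)) ^ 2) := by
    rw [sub_mul, Finset.sum_mul, hA]
    congr 1
    exact Finset.sum_congr rfl fun i _ => R2 i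
  have hinner : (inner ℝ (w p) (fderiv ℝ w p ((1:ℝ), (0 : EuclideanSpace ℝ (Fin n)))) : ℝ)
        - ∑ i : Fin n,
            (inner ℝ (w p) (fderiv ℝ (fun q => fderiv ℝ w q (ee i)) p (ee i)) : ℝ)
      = (inner ℝ (w p) ((-2 : ℂ) * g) : ℝ) := by
    rw [← inner_sum, ← inner_sub_right, hkey']
  have hbound1 : (inner ℝ (w p) ((-2 : ℂ) * g) : ℝ) ≤ φ p * (2 * ‖g‖) := by
    calc (inner ℝ (w p) ((-2 : ℂ) * g) : ℝ) ≤ ‖w p‖ * ‖(-2 : ℂ) * g‖ := real_inner_le_norm _ _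
    _ = ‖w p‖ * (2 * ‖g‖) := by
        rw [norm_mul]
        norm_num
    _ ≤ φ p * (2 * ‖g‖) := by
        apply mul_le_mul_of_nonneg_right hwle
        positivity
  have hbound2 : ∑ i : Fin n, (fderiv ℝ φ p (ee i)) ^ 2
      ≤ ∑ i : Fin n, ‖fderiv ℝ w p (ee i)‖ ^ 2 :=
    Finset.sum_le_sum fun i _ => haux i
  rw [hexp, Finset.sum_sub_distrib, Finset.sum_add_distrib]
  linarith

/-- `(∂ₜ - Δ)(uv) = -2 ∇u·∇v` at `p`. -/
private lemma prodHeat {T : ℝ} {u v : ℝ × EuclideanSpace ℝ (Fin n) → ℂ}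
    {p : ℝ × EuclideanSpace ℝ (Fin n)}
    (hp : p ∈ Set.Ioo 0 T ×ˢ (Set.univ : Set (EuclideanSpace ℝ (Fin n))))
    (hu : ContDiffOn ℝ (⊤ : ℕ∞) u (Set.Ioo 0 T ×ˢ Set.univ))
    (hv : ContDiffOn ℝ (⊤ : ℕ∞) v (Set.Ioo 0 T ×ˢ Set.univ))
    (hheatu : pt u p = lap u p) (hheatv : pt v p = lap v p) :
    pt (fun q => u q * v q) p - lap (fun q => u q * v q) p
      = -2 * ∑ i : Fin n, px u i p * px v i p := by
  have hΩ : IsOpen (Set.Ioo (0:ℝ) T ×ˢ (Set.univ : Set (EuclideanSpace ℝ (Fin n)))) :=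
    isOpen_Ioo.prod isOpen_univ
  have hmem : Set.Ioo (0:ℝ) T ×ˢ (Set.univ : Set (EuclideanSpace ℝ (Fin n))) ∈ nhds p :=
    hΩ.mem_nhds hp
  have hCu : ∀ q ∈ Set.Ioo (0:ℝ) T ×ˢ (Set.univ : Set (EuclideanSpace ℝ (Fin n))),
      ContDiffAt ℝ (⊤ : ℕ∞) u q := fun q hq => hu.contDiffAt (hΩ.mem_nhds hq)
  have hCv : ∀ q ∈ Set.Ioo (0:ℝ) T ×ˢ (Set.univ : Set (EuclideanSpace ℝ (Fin n))),
      ContDiffAt ℝ (⊤ : ℕ∞) v q := fun q hq => hv.contDiffAt (hΩ.mem_nhds hq)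
  have hup := hCu p hp
  have hvp := hCv p hp
  have hupd := hup.differentiableAt (by simp)
  have hvpd := hvp.differentiableAt (by simp)
  have hptw : fderiv ℝ (fun q => u q * v q) p ((1:ℝ), (0 : EuclideanSpace ℝ (Fin n)))
      = fderiv ℝ u p ((1:ℝ), (0 : EuclideanSpace ℝ (Fin n))) * v p
        + u p * fderiv ℝ v p ((1:ℝ), (0 : EuclideanSpace ℝ (Fin n))) := fmul hupd hvpd _
  have hsec : ∀ i : Fin n,
      fderiv ℝ (fun q => fderiv ℝ (fun r => u r * v r) q (ee i)) p (ee i)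
        = fderiv ℝ (fun q => fderiv ℝ u q (ee i)) p (ee i) * v p
          + fderiv ℝ u p (ee i) * fderiv ℝ v p (ee i)
          + (fderiv ℝ u p (ee i) * fderiv ℝ v p (ee i)
            + u p * fderiv ℝ (fun q => fderiv ℝ v q (ee i)) p (ee i)) := by
    intro i
    have hEq : (fun q => fderiv ℝ (fun r => u r * v r) q (ee i))
        =ᶠ[nhds p] (fun q => fderiv ℝ u q (ee i) * v q + u q * fderiv ℝ v q (ee i)) :=
      Filter.eventuallyEq_of_mem hmem (fun q hq =>
        fmul ((hCu q hq).differentiableAt (by simp)) ((hCv q hq).differentiableAt (by simp)) (ee i))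
    rw [hEq.fderiv_eq]
    have hd1 : DifferentiableAt ℝ (fun q => fderiv ℝ u q (ee i) * v q) p :=
      (diffSlice hup (ee i)).mul hvpd
    have hd2 : DifferentiableAt ℝ (fun q => u q * fderiv ℝ v q (ee i)) p :=
      hupd.mul (diffSlice hvp (ee i))
    have hadd := fderiv_fun_add hd1 hd2
    rw [show (fun q => fderiv ℝ u q (ee i) * v q + u q * fderiv ℝ v q (ee i))
          = (fun q => (fun r => fderiv ℝ u r (ee i) * v r) q
            + (fun r => u r * fderiv ℝ v r (ee i)) q) from rfl, hadd]
    rw [ContinuousLinearMap.add_apply]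
    rw [fmul (diffSlice hup (ee i)) hvpd (ee i), fmul hupd (diffSlice hvp (ee i)) (ee i)]
  have hheatu' : fderiv ℝ u p ((1:ℝ), (0 : EuclideanSpace ℝ (Fin n)))
      = ∑ i : Fin n, fderiv ℝ (fun q => fderiv ℝ u q (ee i)) p (ee i) := hheatu
  have hheatv' : fderiv ℝ v p ((1:ℝ), (0 : EuclideanSpace ℝ (Fin n)))
      = ∑ i : Fin n, fderiv ℝ (fun q => fderiv ℝ v q (ee i)) p (ee i) := hheatv
  show fderiv ℝ (fun q => u q * v q) p ((1:ℝ), (0 : EuclideanSpace ℝ (Fin n)))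
      - ∑ i : Fin n, fderiv ℝ (fun q => fderiv ℝ (fun r => u r * v r) q (ee i)) p (ee i)
      = -2 * ∑ i : Fin n, fderiv ℝ u p (ee i) * fderiv ℝ v p (ee i)
  rw [hptw, Finset.sum_congr rfl fun i _ => hsec i, hheatu', hheatv']
  simp only [Finset.sum_add_distrib, ← Finset.sum_mul, ← Finset.mul_sum]
  ring

end auxlemmas

theorem stmt_7 (n : ℕ) (T δ : ℝ) (hδ : 0 < δ)
    (u v : ℝ × EuclideanSpace ℝ (Fin n) → ℂ)
    (hu : ContDiffOn ℝ (⊤ : ℕ∞) u (Set.Ioo 0 T ×ˢ Set.univ))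
    (hv : ContDiffOn ℝ (⊤ : ℕ∞) v (Set.Ioo 0 T ×ˢ Set.univ))
    (hheatu : ∀ p ∈ Set.Ioo 0 T ×ˢ (Set.univ : Set (EuclideanSpace ℝ (Fin n))),
      pt u p = lap u p)
    (hheatv : ∀ p ∈ Set.Ioo 0 T ×ˢ (Set.univ : Set (EuclideanSpace ℝ (Fin n))),
      pt v p = lap v p) :
    ∀ p ∈ Set.Ioo 0 T ×ˢ (Set.univ : Set (EuclideanSpace ℝ (Fin n))),
      pt (fun q => Real.sqrt (δ ^ 2 + ‖u q * v q‖ ^ 2)) p -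
          lap (fun q => Real.sqrt (δ ^ 2 + ‖u q * v q‖ ^ 2)) p ≤
        2 * ‖∑ i : Fin n, px u i p * px v i p‖ := by
  intro p hp
  have hΩ : IsOpen (Set.Ioo (0:ℝ) T ×ˢ (Set.univ : Set (EuclideanSpace ℝ (Fin n)))) :=
    isOpen_Ioo.prod isOpen_univ
  have hCw : ∀ q ∈ Set.Ioo (0:ℝ) T ×ˢ (Set.univ : Set (EuclideanSpace ℝ (Fin n))),
      ContDiffAt ℝ (⊤ : ℕ∞) (fun r => u r * v r) q := fun q hq =>
    (hu.contDiffAt (hΩ.mem_nhds hq)).mul (hv.contDiffAt (hΩ.mem_nhds hq))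
  have hkey := prodHeat hp hu hv (hheatu p hp) (hheatv p hp)
  exact keyIneq hδ hp hCw hkey
end

section
/- Let a > 0, and let (a_i)_{i∈ℕ} be a square-summable real sequence and (μ_i)_{i∈ℕ} real numbers with |2μ_i − 2a| ≥ a for all i, with all the sums below finite. Define N(t)² = Σ_i a_i² e^{2μ_i t}. Then (1/2)(N(0)² + e^{−4a} N(2)²) ≥ cosh(a) · e^{−2a} · N(1)². -/
/-!
The inequality holds mode by mode, and summing it over `i` gives the claim. For one mode, with
`x = 2μ - 2a`, the right-hand side is `e^x cosh a` and the left-hand side is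
`e^x cosh x = (e^{2x} + 1)/2`, up to the factor `c²`; the gap condition `|x| ≥ a` gives
`cosh x ≥ cosh a`.
-/

open Real

lemma exp_mul_cosh (x : ℝ) : exp x * cosh x = (exp (2 * x) + 1) / 2 := by
  have hsq : exp (2 * x) = exp x * exp x := by rw [← exp_add]; ring_nf
  have hinv : exp x * exp (-x) = 1 := by rw [← exp_add, add_neg_cancel, exp_zero]
  rw [cosh_eq, hsq]
  linear_combination hinv / 2

lemma cosh_mul_exp_le_of_abs_le {b x : ℝ} (h : |b| ≤ |x|) :
    cosh b * exp x ≤ (exp (2 * x) + 1) / 2 := by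
  rw [← exp_mul_cosh, mul_comm]
  exact mul_le_mul_of_nonneg_left (cosh_le_cosh.2 h) (exp_pos x).le

lemma cosh_mul_exp_mode_le {a μ w : ℝ} (ha : 0 < a) (hμ : a ≤ |2 * μ - 2 * a|) (hw : 0 ≤ w) :
    cosh a * exp (-2 * a) * (w * exp (2 * μ * 1)) ≤
      1 / 2 * (w * exp (2 * μ * 0) + exp (-4 * a) * (w * exp (2 * μ * 2))) := by
  have hgap : cosh a * exp (2 * μ - 2 * a) ≤ (exp (2 * (2 * μ - 2 * a)) + 1) / 2 :=
    cosh_mul_exp_le_of_abs_le (by rwa [abs_of_pos ha])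
  have hx : exp (-2 * a) * exp (2 * μ * 1) = exp (2 * μ - 2 * a) := by rw [← exp_add]; ring_nf
  have h2x : exp (-4 * a) * exp (2 * μ * 2) = exp (2 * (2 * μ - 2 * a)) := by
    rw [← exp_add]; ring_nf
  calc cosh a * exp (-2 * a) * (w * exp (2 * μ * 1))
      = w * (cosh a * exp (2 * μ - 2 * a)) := by rw [← hx]; ring
    _ ≤ w * ((exp (2 * (2 * μ - 2 * a)) + 1) / 2) := mul_le_mul_of_nonneg_left hgap hw
    _ = 1 / 2 * (w * exp (2 * μ * 0) + exp (-4 * a) * (w * exp (2 * μ * 2))) := by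
      rw [mul_zero, exp_zero, ← h2x]; ring

theorem stmt_13 (a : ℝ) (ha : 0 < a) (c μ : ℕ → ℝ)
    (hμ : ∀ i, a ≤ |2 * μ i - 2 * a|)
    (hsum : ∀ t ∈ ({0, 1, 2} : Set ℝ),
      Summable fun i => c i ^ 2 * Real.exp (2 * μ i * t)) :
    (1 / 2) * ((∑' i, c i ^ 2 * Real.exp (2 * μ i * 0)) +
        Real.exp (-4 * a) * ∑' i, c i ^ 2 * Real.exp (2 * μ i * 2)) ≥
      Real.cosh a * Real.exp (-2 * a) *
        ∑' i, c i ^ 2 * Real.exp (2 * μ i * 1) := by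
  have h0 := hsum 0 (by simp)
  have h1 := hsum 1 (by simp)
  have h2 := hsum 2 (by simp)
  rw [ge_iff_le, ← tsum_mul_left, ← tsum_mul_left (a := exp (-4 * a)),
    ← h0.tsum_add (h2.mul_left _), ← tsum_mul_left]
  exact Summable.tsum_le_tsum (fun i => cosh_mul_exp_mode_le ha (hμ i) (sq_nonneg (c i)))
    (h1.mul_left _) ((h0.add (h2.mul_left _)).mul_left _)
end

section
/- Let u : (0,∞) × ℝ^n → ℝ be a smooth solution of the drift heat equation ∂_s u = Δu + (1/2)(u − x·∇u). Then the function f(s,x) = u² + s|∇u|² satisfies (∂_s − L₀) f = u² − |∇u|² − 2s|∇²u|² ≤ u² pointwise for s ≥ 0, where L₀ = Δ − (1/2) x·∇ is the drift Laplacian. -/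
open scoped BigOperators

noncomputable section
variable {n : ℕ}

/-- directional derivative on `ℝ × ℝⁿ`. -/
def DD (v : ℝ × EuclideanSpace ℝ (Fin n)) (f : ℝ × EuclideanSpace ℝ (Fin n) → ℝ)
    (p : ℝ × EuclideanSpace ℝ (Fin n)) : ℝ := fderiv ℝ f p v

variable {v w : ℝ × EuclideanSpace ℝ (Fin n)} {f g : ℝ × EuclideanSpace ℝ (Fin n) → ℝ}
  {p : ℝ × EuclideanSpace ℝ (Fin n)}

lemma DD_congr (h : f =ᶠ[nhds p] g) : DD v f p = DD v g p := by
  rw [DD, h.fderiv_eq]; rfl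

lemma DD_add (hf : DifferentiableAt ℝ f p) (hg : DifferentiableAt ℝ g p) :
    DD v (fun q => f q + g q) p = DD v f p + DD v g p := by
  simp [DD, fderiv_fun_add hf hg]

lemma DD_mul (hf : DifferentiableAt ℝ f p) (hg : DifferentiableAt ℝ g p) :
    DD v (fun q => f q * g q) p = DD v f p * g p + f p * DD v g p := by
  simp [DD, fderiv_fun_mul hf hg]; ring

lemma DD_sq (hf : DifferentiableAt ℝ f p) :
    DD v (fun q => f q ^ 2) p = 2 * f p * DD v f p := by
  have := DD_mul (v := v) hf hf
  simp only [← sq] at this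
  rw [this]; ring

lemma DD_sum {ι : Type*} (s : Finset ι) (F : ι → (ℝ × EuclideanSpace ℝ (Fin n) → ℝ))
    (hF : ∀ i ∈ s, DifferentiableAt ℝ (F i) p) :
    DD v (fun q => ∑ i ∈ s, F i q) p = ∑ i ∈ s, DD v (F i) p := by
  simp [DD, fderiv_fun_sum hF]

lemma DD_fst : DD v (fun q => q.1) p = v.1 := by
  have : (fun q : ℝ × EuclideanSpace ℝ (Fin n) => q.1)
      = (ContinuousLinearMap.fst ℝ ℝ (EuclideanSpace ℝ (Fin n))) := rfl
  rw [DD, this, ContinuousLinearMap.fderiv]; rfl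

lemma DD_coord (j : Fin n) : DD v (fun q => q.2 j) p = v.2 j := by
  have : (fun q : ℝ × EuclideanSpace ℝ (Fin n) => q.2 j)
      = ((EuclideanSpace.proj j).comp
          (ContinuousLinearMap.snd ℝ ℝ (EuclideanSpace ℝ (Fin n)))) := rfl
  rw [DD, this, ContinuousLinearMap.fderiv]; rfl

lemma diff_fst : DifferentiableAt ℝ (fun q : ℝ × EuclideanSpace ℝ (Fin n) => q.1) p :=
  (differentiable_fst) p

lemma diff_coord (j : Fin n) :
    DifferentiableAt ℝ (fun q : ℝ × EuclideanSpace ℝ (Fin n) => q.2 j) p :=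
  ((EuclideanSpace.proj (𝕜 := ℝ) j).differentiable.comp differentiable_snd) p

lemma ContDiffAt.DD' (hf : ContDiffAt ℝ (⊤ : ℕ∞) f p) : ContDiffAt ℝ (⊤ : ℕ∞) (DD v f) p := by
  have h1 : ContDiffAt ℝ (⊤ : ℕ∞) (fderiv ℝ f) p := hf.fderiv_right (by exact (by simp))
  exact h1.clm_apply contDiffAt_const

lemma schwarz (hf : ContDiffAt ℝ (⊤ : ℕ∞) f p) : DD v (DD w f) p = DD w (DD v f) p := by
  have hd : DifferentiableAt ℝ (fderiv ℝ f) p :=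
    (hf.fderiv_right (m := (⊤ : ℕ∞)) (n := (⊤ : ℕ∞)) (by exact (by simp))).differentiableAt (by simp)
  have key : ∀ a b : ℝ × EuclideanSpace ℝ (Fin n),
      DD a (DD b f) p = fderiv ℝ (fderiv ℝ f) p a b := by
    intro a b
    have : DD a (DD b f) p = fderiv ℝ (fun q => fderiv ℝ f q b) p a := rfl
    rw [this, fderiv_clm_apply hd (differentiableAt_const b)]
    simp
  rw [key, key]
  exact (hf.isSymmSndFDerivAt (by rw [minSmoothness_of_isRCLikeNormedField]; exact WithTop.coe_le_coe.mpr le_top)) v w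

lemma DD_const_mul (c : ℝ) (hf : DifferentiableAt ℝ f p) :
    DD v (fun q => c * f q) p = c * DD v f p := by
  simp [DD, fderiv_const_mul hf c]

lemma pt_eq (h : ℝ × EuclideanSpace ℝ (Fin n) → ℝ) :
    pt h = DD ((1:ℝ), (0:EuclideanSpace ℝ (Fin n))) h := rfl
lemma px_eq (h : ℝ × EuclideanSpace ℝ (Fin n) → ℝ) (i : Fin n) :
    px h i = DD ((0:ℝ), EuclideanSpace.single i (1:ℝ)) h := rfl

/-- First derivative formula for `f = u² + s|∇u|²`, valid wherever `u` is `C^∞`. -/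
lemma first_deriv {u : ℝ × EuclideanSpace ℝ (Fin n) → ℝ}
    {q : ℝ × EuclideanSpace ℝ (Fin n)} (hq : ContDiffAt ℝ (⊤ : ℕ∞) u q)
    (v : ℝ × EuclideanSpace ℝ (Fin n)) :
    DD v (fun q => u q ^ 2 + q.1 * ∑ i : Fin n, px u i q ^ 2) q
      = 2 * u q * DD v u q + v.1 * (∑ i : Fin n, px u i q ^ 2)
        + q.1 * ∑ i : Fin n, 2 * px u i q * DD v (px u i) q := by
  have du : DifferentiableAt ℝ u q := hq.differentiableAt (by simp)
  have dpx : ∀ i : Fin n, DifferentiableAt ℝ (px u i) q := fun i => by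
    rw [px_eq]; exact (hq.DD').differentiableAt (by simp)
  have dg : DifferentiableAt ℝ (fun q => ∑ i : Fin n, px u i q ^ 2) q :=
    DifferentiableAt.fun_sum fun i _ => (dpx i).pow 2
  rw [DD_add (du.fun_pow 2) (diff_fst.fun_mul dg), DD_sq du, DD_mul diff_fst dg, DD_fst,
    DD_sum _ _ (fun i _ => (dpx i).fun_pow 2)]
  have hs : ∑ i : Fin n, DD v (fun x => px u i x ^ 2) q
      = ∑ i : Fin n, 2 * px u i q * DD v (px u i) q :=
    Finset.sum_congr rfl fun i _ => DD_sq (dpx i)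
  rw [hs]; ring

lemma DD_sub (hf : DifferentiableAt ℝ f p) (hg : DifferentiableAt ℝ g p) :
    DD v (fun q => f q - g q) p = DD v f p - DD v g p := by
  simp [DD, fderiv_fun_sub hf hg]

lemma cpx {u : ℝ × EuclideanSpace ℝ (Fin n) → ℝ} {q : ℝ × EuclideanSpace ℝ (Fin n)}
    (hq : ContDiffAt ℝ (⊤ : ℕ∞) u q) (i : Fin n) : ContDiffAt ℝ (⊤ : ℕ∞) (px u i) q := by
  rw [px_eq]; exact hq.DD'

lemma px_symm {u : ℝ × EuclideanSpace ℝ (Fin n) → ℝ} {q : ℝ × EuclideanSpace ℝ (Fin n)}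
    (hq : ContDiffAt ℝ (⊤ : ℕ∞) u q) (i j : Fin n) : px (px u i) j q = px (px u j) i q := by
  rw [px_eq u i, px_eq _ j, px_eq u j, px_eq _ i]; exact schwarz hq

lemma pt_px_symm {u : ℝ × EuclideanSpace ℝ (Fin n) → ℝ} {q : ℝ × EuclideanSpace ℝ (Fin n)}
    (hq : ContDiffAt ℝ (⊤ : ℕ∞) u q) (i : Fin n) : pt (px u i) q = px (pt u) i q := by
  rw [px_eq u i, pt_eq, pt_eq u, px_eq _ i]; exact schwarz hq

lemma third_comm {u : ℝ × EuclideanSpace ℝ (Fin n) → ℝ} {p : ℝ × EuclideanSpace ℝ (Fin n)}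
    (hE : ∀ᶠ q in nhds p, ContDiffAt ℝ (⊤ : ℕ∞) u q) (i j : Fin n) :
    px (px (px u j) j) i p = px (px (px u i) j) j p := by
  have h1 : px (px (px u j) j) i p = px (px (px u j) i) j p :=
    px_symm (cpx hE.self_of_nhds j) j i
  rw [h1]
  have h2 : px (px u j) i =ᶠ[nhds p] px (px u i) j :=
    hE.mono fun q hq => px_symm hq j i
  rw [px_eq _ j, px_eq _ j]
  exact DD_congr h2

/-- The differentiated drift equation. -/
lemma pt_px_formula {u : ℝ × EuclideanSpace ℝ (Fin n) → ℝ} {p : ℝ × EuclideanSpace ℝ (Fin n)}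
    (hE : ∀ᶠ q in nhds p, ContDiffAt ℝ (⊤ : ℕ∞) u q)
    (hD : ∀ᶠ q in nhds p, pt u q
      = lap u q + (1 / 2) * (u q - ∑ j : Fin n, q.2 j * px u j q)) (i : Fin n) :
    pt (px u i) p = ∑ j : Fin n, px (px (px u i) j) j p
      - (1 / 2) * ∑ j : Fin n, p.2 j * px (px u i) j p := by
  have hp : ContDiffAt ℝ (⊤ : ℕ∞) u p := hE.self_of_nhds
  have dpx : ∀ j : Fin n, DifferentiableAt ℝ (px u j) p :=
    fun j => (cpx hp j).differentiableAt (by simp)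
  have dpxpx : ∀ j k : Fin n, DifferentiableAt ℝ (px (px u j) k) p :=
    fun j k => (cpx (cpx hp j) k).differentiableAt (by simp)
  have dlap : DifferentiableAt ℝ (lap u) p := by
    have : lap u = fun q => ∑ j : Fin n, px (px u j) j q := rfl
    rw [this]; exact DifferentiableAt.fun_sum fun j _ => dpxpx j j
  have dcoordmul : ∀ j : Fin n,
      DifferentiableAt ℝ (fun q : ℝ × EuclideanSpace ℝ (Fin n) => q.2 j * px u j q) p :=
    fun j => (diff_coord j).mul (dpx j)
  have dsum : DifferentiableAt ℝ
      (fun q : ℝ × EuclideanSpace ℝ (Fin n) => ∑ j : Fin n, q.2 j * px u j q) p :=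
    DifferentiableAt.fun_sum fun j _ => dcoordmul j
  have du : DifferentiableAt ℝ u p := hp.differentiableAt (by simp)
  have step1 : pt (px u i) p = px (pt u) i p := pt_px_symm hp i
  rw [step1, px_eq _ i, DD_congr hD]
  rw [DD_add dlap ((du.fun_sub dsum).const_mul _)]
  have hlap : DD ((0:ℝ), EuclideanSpace.single i (1:ℝ)) (lap u) p
      = ∑ j : Fin n, px (px (px u i) j) j p := by
    have : lap u = fun q => ∑ j : Fin n, px (px u j) j q := rfl
    rw [this, DD_sum _ _ (fun j _ => dpxpx j j)]
    exact Finset.sum_congr rfl fun j _ => third_comm hE i j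
  have hrest : DD ((0:ℝ), EuclideanSpace.single i (1:ℝ))
      (fun q => (1:ℝ) / 2 * (u q - ∑ j : Fin n, q.2 j * px u j q)) p
      = (1/2) * (px u i p - (px u i p + ∑ j : Fin n, p.2 j * px (px u i) j p)) := by
    rw [DD_const_mul _ (du.fun_sub dsum), DD_sub du dsum,
      DD_sum _ _ (fun j _ => dcoordmul j)]
    have hterm : ∀ j : Fin n, DD ((0:ℝ), EuclideanSpace.single i (1:ℝ))
        (fun q : ℝ × EuclideanSpace ℝ (Fin n) => q.2 j * px u j q) p
        = (EuclideanSpace.single i (1:ℝ)) j * px u j p + p.2 j * px (px u j) i p := by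
      intro j
      rw [DD_mul (diff_coord j) (dpx j), DD_coord j]; rfl
    rw [Finset.sum_congr rfl fun j _ => hterm j, Finset.sum_add_distrib]
    have h1 : ∑ j : Fin n, (EuclideanSpace.single i (1:ℝ)) j * px u j p = px u i p := by
      have : ∀ j : Fin n, (EuclideanSpace.single i (1:ℝ)) j * px u j p
          = if j = i then px u j p else 0 := by
        intro j; rw [EuclideanSpace.single_apply]; split <;> simp
      rw [Finset.sum_congr rfl fun j _ => this j, Finset.sum_ite_eq' Finset.univ i]
      simp
    have h2 : ∑ j : Fin n, p.2 j * px (px u j) i p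
        = ∑ j : Fin n, p.2 j * px (px u i) j p :=
      Finset.sum_congr rfl fun j _ => by rw [px_symm hp j i]
    rw [h1, h2]
    rfl
  rw [hlap, hrest]
  ring

lemma second_deriv {u : ℝ × EuclideanSpace ℝ (Fin n) → ℝ} {p : ℝ × EuclideanSpace ℝ (Fin n)}
    (hE : ∀ᶠ q in nhds p, ContDiffAt ℝ (⊤ : ℕ∞) u q) (j : Fin n) :
    px (px (fun q => u q ^ 2 + q.1 * ∑ i : Fin n, px u i q ^ 2) j) j p
      = 2 * px u j p ^ 2 + 2 * u p * px (px u j) j p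
        + p.1 * ∑ i : Fin n,
            (2 * px (px u i) j p ^ 2 + 2 * px u i p * px (px (px u i) j) j p) := by
  have hp : ContDiffAt ℝ (⊤ : ℕ∞) u p := hE.self_of_nhds
  set vj : ℝ × EuclideanSpace ℝ (Fin n) := ((0:ℝ), EuclideanSpace.single j (1:ℝ)) with hvj
  -- eventual formula for the first derivative
  have hev : px (fun q => u q ^ 2 + q.1 * ∑ i : Fin n, px u i q ^ 2) j
      =ᶠ[nhds p] (fun q => 2 * u q * px u j q
          + (0:ℝ) * (∑ i : Fin n, px u i q ^ 2)
          + q.1 * ∑ i : Fin n, 2 * px u i q * px (px u i) j q) := by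
    refine hE.mono fun q hq => ?_
    have h := first_deriv hq vj
    exact h
  rw [px_eq _ j, DD_congr hev]
  -- differentiability of the pieces at p
  have du : DifferentiableAt ℝ u p := hp.differentiableAt (by simp)
  have dpx : ∀ i : Fin n, DifferentiableAt ℝ (px u i) p :=
    fun i => (cpx hp i).differentiableAt (by simp)
  have dpxpx : ∀ i k : Fin n, DifferentiableAt ℝ (px (px u i) k) p :=
    fun i k => (cpx (cpx hp i) k).differentiableAt (by simp)
  have dA : DifferentiableAt ℝ (fun q => 2 * u q * px u j q) p :=
    (du.const_mul 2).mul (dpx j)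
  have dg : DifferentiableAt ℝ (fun q => ∑ i : Fin n, px u i q ^ 2) p :=
    DifferentiableAt.fun_sum fun i _ => (dpx i).pow 2
  have dZ : DifferentiableAt ℝ (fun q => (0:ℝ) * (∑ i : Fin n, px u i q ^ 2)) p :=
    dg.const_mul 0
  have dGi : ∀ i : Fin n, DifferentiableAt ℝ
      (fun q => 2 * px u i q * px (px u i) j q) p :=
    fun i => ((dpx i).const_mul 2).mul (dpxpx i j)
  have dG : DifferentiableAt ℝ
      (fun q => ∑ i : Fin n, 2 * px u i q * px (px u i) j q) p :=
    DifferentiableAt.fun_sum fun i _ => dGi i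
  have dB : DifferentiableAt ℝ
      (fun q => q.1 * ∑ i : Fin n, 2 * px u i q * px (px u i) j q) p :=
    diff_fst.mul dG
  rw [DD_add (dA.fun_add dZ) dB, DD_add dA dZ, DD_mul (du.const_mul 2) (dpx j),
    DD_const_mul 2 du, DD_const_mul 0 dg, DD_mul diff_fst dG, DD_fst,
    DD_sum _ _ (fun i _ => dGi i)]
  have hterm : ∀ i : Fin n,
      DD vj (fun q => 2 * px u i q * px (px u i) j q) p
        = 2 * px (px u i) j p * px (px u i) j p
          + 2 * px u i p * px (px (px u i) j) j p := by
    intro i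
    rw [DD_mul ((dpx i).const_mul 2) (dpxpx i j), DD_const_mul 2 (dpx i)]
    rfl
  rw [Finset.sum_congr rfl fun i _ => hterm i]
  have h1 : DD vj u p = px u j p := rfl
  have h2 : DD vj (px u j) p = px (px u j) j p := rfl
  rw [h1, h2]
  have hsum : ∑ i : Fin n,
      (2 * px (px u i) j p * px (px u i) j p + 2 * px u i p * px (px (px u i) j) j p)
      = ∑ i : Fin n,
      (2 * px (px u i) j p ^ 2 + 2 * px u i p * px (px (px u i) j) j p) :=
    Finset.sum_congr rfl fun i _ => by ring
  rw [hsum]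
  norm_num
  ring

lemma first_deriv_t {u : ℝ × EuclideanSpace ℝ (Fin n) → ℝ}
    {p : ℝ × EuclideanSpace ℝ (Fin n)} (hp : ContDiffAt ℝ (⊤ : ℕ∞) u p) :
    pt (fun q => u q ^ 2 + q.1 * ∑ i : Fin n, px u i q ^ 2) p
      = 2 * u p * pt u p + (∑ i : Fin n, px u i p ^ 2)
        + p.1 * ∑ i : Fin n, 2 * px u i p * pt (px u i) p := by
  have h : pt (fun q => u q ^ 2 + q.1 * ∑ i : Fin n, px u i q ^ 2) p
      = 2 * u p * pt u p + (1:ℝ) * (∑ i : Fin n, px u i p ^ 2)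
        + p.1 * ∑ i : Fin n, 2 * px u i p * pt (px u i) p :=
    first_deriv hp ((1:ℝ), (0:EuclideanSpace ℝ (Fin n)))
  rw [h]; ring

lemma first_deriv_x {u : ℝ × EuclideanSpace ℝ (Fin n) → ℝ}
    {p : ℝ × EuclideanSpace ℝ (Fin n)} (hp : ContDiffAt ℝ (⊤ : ℕ∞) u p) (i : Fin n) :
    px (fun q => u q ^ 2 + q.1 * ∑ j : Fin n, px u j q ^ 2) i p
      = 2 * u p * px u i p + p.1 * ∑ k : Fin n, 2 * px u k p * px (px u k) i p := by
  have h : px (fun q => u q ^ 2 + q.1 * ∑ j : Fin n, px u j q ^ 2) i p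
      = 2 * u p * px u i p + (0:ℝ) * (∑ j : Fin n, px u j p ^ 2)
        + p.1 * ∑ k : Fin n, 2 * px u k p * px (px u k) i p :=
    first_deriv hp ((0:ℝ), EuclideanSpace.single i (1:ℝ))
  rw [h]; ring

/-- pure algebra assembly. -/
lemma algebra_key (s u0 ptu : ℝ) (a xv ptA : Fin n → ℝ) (b c : Fin n → Fin n → ℝ)
    (hptu : ptu = (∑ j : Fin n, b j j) + (1/2) * (u0 - ∑ j : Fin n, xv j * a j))
    (hptA : ∀ i, ptA i = (∑ j : Fin n, c i j) - (1/2) * ∑ j : Fin n, xv j * b i j) :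
    (2 * u0 * ptu + (∑ i : Fin n, a i ^ 2) + s * ∑ i : Fin n, 2 * a i * ptA i) -
      ((∑ j : Fin n, (2 * a j ^ 2 + 2 * u0 * b j j
          + s * ∑ i : Fin n, (2 * b i j ^ 2 + 2 * a i * c i j))) -
        (1/2) * ∑ i : Fin n, xv i * (2 * u0 * a i + s * ∑ k : Fin n, 2 * a k * b k i)) =
      u0 ^ 2 - (∑ i : Fin n, a i ^ 2) - 2 * s * ∑ i : Fin n, ∑ j : Fin n, b i j ^ 2 := by
  set SA := ∑ i : Fin n, a i ^ 2 with hSA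
  set SB := ∑ j : Fin n, b j j with hSB
  set SX := ∑ j : Fin n, xv j * a j with hSX
  set SC := ∑ i : Fin n, ∑ j : Fin n, a i * c i j with hSC
  set SD := ∑ i : Fin n, ∑ j : Fin n, xv j * (a i * b i j) with hSD
  set SQ := ∑ i : Fin n, ∑ j : Fin n, b i j ^ 2 with hSQ
  have h1 : ∑ i : Fin n, 2 * a i * ptA i = 2 * SC - SD := by
    have e : ∀ i, 2 * a i * ptA i
        = (∑ j : Fin n, 2 * (a i * c i j)) - ∑ j : Fin n, xv j * (a i * b i j) := by
      intro i
      rw [hptA i]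
      have c1 : ∑ j : Fin n, 2 * (a i * c i j) = 2 * a i * ∑ j : Fin n, c i j := by
        rw [Finset.mul_sum]; exact Finset.sum_congr rfl fun j _ => by ring
      have c2 : ∑ j : Fin n, xv j * (a i * b i j) = a i * ∑ j : Fin n, xv j * b i j := by
        rw [Finset.mul_sum]; exact Finset.sum_congr rfl fun j _ => by ring
      rw [c1, c2]; ring
    rw [Finset.sum_congr rfl fun i _ => e i, Finset.sum_sub_distrib]
    congr 1
    rw [hSC, Finset.mul_sum]
    exact Finset.sum_congr rfl fun i _ => by rw [Finset.mul_sum]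
  have h2 : ∑ j : Fin n, (2 * a j ^ 2 + 2 * u0 * b j j
        + s * ∑ i : Fin n, (2 * b i j ^ 2 + 2 * a i * c i j))
      = 2 * SA + 2 * u0 * SB + s * (2 * SQ + 2 * SC) := by
    simp only [Finset.sum_add_distrib]
    have t1 : ∑ j : Fin n, 2 * a j ^ 2 = 2 * SA := by
      rw [hSA, Finset.mul_sum]
    have t2 : ∑ j : Fin n, 2 * u0 * b j j = 2 * u0 * SB := by
      rw [hSB, Finset.mul_sum]
    have t3 : ∑ j : Fin n, s * ((∑ i : Fin n, 2 * b i j ^ 2) + ∑ i : Fin n, 2 * a i * c i j)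
        = s * (2 * SQ + 2 * SC) := by
      rw [← Finset.mul_sum]
      congr 1
      rw [Finset.sum_add_distrib]
      congr 1
      · rw [Finset.sum_comm, hSQ, Finset.mul_sum]
        exact Finset.sum_congr rfl fun i _ => by rw [Finset.mul_sum]
      · rw [Finset.sum_comm, hSC, Finset.mul_sum]
        refine Finset.sum_congr rfl fun i _ => ?_
        rw [Finset.mul_sum]
        exact Finset.sum_congr rfl fun j _ => by ring
    rw [t1, t2, t3]
  have h3 : ∑ i : Fin n, xv i * (2 * u0 * a i + s * ∑ k : Fin n, 2 * a k * b k i)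
      = 2 * u0 * SX + s * (2 * SD) := by
    have e : ∀ i, xv i * (2 * u0 * a i + s * ∑ k : Fin n, 2 * a k * b k i)
        = 2 * u0 * (xv i * a i) + s * ∑ k : Fin n, 2 * (xv i * (a k * b k i)) := by
      intro i
      have c1 : ∑ k : Fin n, 2 * (xv i * (a k * b k i))
          = xv i * ∑ k : Fin n, 2 * a k * b k i := by
        rw [Finset.mul_sum]; exact Finset.sum_congr rfl fun k _ => by ring
      rw [c1]; ring
    rw [Finset.sum_congr rfl fun i _ => e i, Finset.sum_add_distrib]
    congr 1
    · rw [hSX, Finset.mul_sum]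
    · rw [← Finset.mul_sum]
      congr 1
      rw [Finset.sum_comm, hSD, Finset.mul_sum]
      refine Finset.sum_congr rfl fun i _ => ?_
      rw [Finset.mul_sum]
  rw [hptu, h1, h2, h3]
  ring


end

theorem stmt_19 (n : ℕ) (u : ℝ × EuclideanSpace ℝ (Fin n) → ℝ)
    (hu : ContDiffOn ℝ (⊤ : ℕ∞) u (Set.Ioi 0 ×ˢ Set.univ))
    (hdrift : ∀ p ∈ Set.Ioi 0 ×ˢ (Set.univ : Set (EuclideanSpace ℝ (Fin n))),
      pt u p = lap u p + (1 / 2) * (u p - ∑ i : Fin n, p.2 i * px u i p)) :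
    ∀ p ∈ Set.Ioi 0 ×ˢ (Set.univ : Set (EuclideanSpace ℝ (Fin n))),
      (pt (fun q => u q ^ 2 + q.1 * ∑ i : Fin n, px u i q ^ 2) p -
          (lap (fun q => u q ^ 2 + q.1 * ∑ i : Fin n, px u i q ^ 2) p -
            (1 / 2) * ∑ i : Fin n,
              p.2 i * px (fun q => u q ^ 2 + q.1 * ∑ j : Fin n, px u j q ^ 2) i p) =
        u p ^ 2 - ∑ i : Fin n, px u i p ^ 2 -
          2 * p.1 * ∑ i : Fin n, ∑ j : Fin n, px (px u i) j p ^ 2) ∧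
      pt (fun q => u q ^ 2 + q.1 * ∑ i : Fin n, px u i q ^ 2) p -
          (lap (fun q => u q ^ 2 + q.1 * ∑ i : Fin n, px u i q ^ 2) p -
            (1 / 2) * ∑ i : Fin n,
              p.2 i * px (fun q => u q ^ 2 + q.1 * ∑ j : Fin n, px u j q ^ 2) i p) ≤
        u p ^ 2 := by
  intro p hp'
  have hΩ : IsOpen (Set.Ioi (0:ℝ) ×ˢ (Set.univ : Set (EuclideanSpace ℝ (Fin n)))) :=
    isOpen_Ioi.prod isOpen_univ
  have hE : ∀ᶠ q in nhds p, ContDiffAt ℝ (⊤ : ℕ∞) u q := by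
    filter_upwards [hΩ.mem_nhds hp'] with q hq
    exact hu.contDiffAt (hΩ.mem_nhds hq)
  have hD : ∀ᶠ q in nhds p,
      pt u q = lap u q + (1 / 2) * (u q - ∑ j : Fin n, q.2 j * px u j q) := by
    filter_upwards [hΩ.mem_nhds hp'] with q hq using hdrift q hq
  have hp : ContDiffAt ℝ (⊤ : ℕ∞) u p := hE.self_of_nhds
  have hptu : pt u p = (∑ j : Fin n, px (px u j) j p)
      + (1/2) * (u p - ∑ j : Fin n, p.2 j * px u j p) := hdrift p hp'
  have hptA : ∀ i : Fin n, pt (px u i) p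
      = (∑ j : Fin n, px (px (px u i) j) j p)
        - (1/2) * ∑ j : Fin n, p.2 j * px (px u i) j p :=
    fun i => pt_px_formula hE hD i
  have KEY := algebra_key p.1 (u p) (pt u p)
    (fun i => px u i p) (fun i => p.2 i) (fun i => pt (px u i) p)
    (fun i j => px (px u i) j p) (fun i j => px (px (px u i) j) j p) hptu hptA
  have hlap : lap (fun q => u q ^ 2 + q.1 * ∑ i : Fin n, px u i q ^ 2) p
      = ∑ j : Fin n, (2 * px u j p ^ 2 + 2 * u p * px (px u j) j p
        + p.1 * ∑ i : Fin n,
            (2 * px (px u i) j p ^ 2 + 2 * px u i p * px (px (px u i) j) j p)) := by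
    have h0 : lap (fun q => u q ^ 2 + q.1 * ∑ i : Fin n, px u i q ^ 2) p
        = ∑ j : Fin n, px (px (fun q => u q ^ 2 + q.1 * ∑ i : Fin n, px u i q ^ 2) j) j p :=
      rfl
    rw [h0]
    exact Finset.sum_congr rfl fun j _ => second_deriv hE j
  have hds : ∑ i : Fin n,
        p.2 i * px (fun q => u q ^ 2 + q.1 * ∑ j : Fin n, px u j q ^ 2) i p
      = ∑ i : Fin n, p.2 i * (2 * u p * px u i p
          + p.1 * ∑ k : Fin n, 2 * px u k p * px (px u k) i p) :=
    Finset.sum_congr rfl fun i _ => by rw [first_deriv_x hp i]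
  have key : pt (fun q => u q ^ 2 + q.1 * ∑ i : Fin n, px u i q ^ 2) p -
      (lap (fun q => u q ^ 2 + q.1 * ∑ i : Fin n, px u i q ^ 2) p -
        (1 / 2) * ∑ i : Fin n,
          p.2 i * px (fun q => u q ^ 2 + q.1 * ∑ j : Fin n, px u j q ^ 2) i p) =
      u p ^ 2 - ∑ i : Fin n, px u i p ^ 2 -
        2 * p.1 * ∑ i : Fin n, ∑ j : Fin n, px (px u i) j p ^ 2 := by
    rw [first_deriv_t hp, hlap, hds]
    exact KEY
  refine ⟨key, ?_⟩
  rw [key]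
  have h1 : 0 ≤ ∑ i : Fin n, px u i p ^ 2 :=
    Finset.sum_nonneg fun i _ => sq_nonneg _
  have h2 : 0 ≤ ∑ i : Fin n, ∑ j : Fin n, px (px u i) j p ^ 2 :=
    Finset.sum_nonneg fun i _ => Finset.sum_nonneg fun j _ => sq_nonneg _
  have h3 : (0:ℝ) ≤ p.1 := le_of_lt hp'.1
  nlinarith [mul_nonneg h3 h2]
end
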